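/- Let $X_1,\dots,X_n$ be a centered Gaussian vector whose inverse covariance matrix has all eigenvalues in $[\lambda_1,\lambda_2]$ with $0<\lambda_1\le\lambda_2$, and let $D\subseteq\mathbb{R}$ be measurable with positive Lebesgue measure. Then $\mathbb{P}(X_i\in D,\ 1\le i\le n)\ge \left(\frac{\lambda_1}{\lambda_2}\right)^{n/2}\mathbb{P}(\mathcal{N}(0,1)\in\sqrt{\lambda_2}\,D)^n$. -/

import Mathlib

/-!
The density `exp(-xᵀQx/2)` is squeezed between the isotropic densities `exp(-λ₂|x|²/2)` and
`exp(-λ₁|x|²/2)`, both of which factor over the coordinates. The upper one bounds the total mass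
by `(2π/λ₁)^{n/2}`; the lower one bounds the mass of `Dⁿ` from below by `(2π/λ₂)^{n/2}` times the
`n`-th power of the `𝒩(0, λ₂⁻¹)`-probability of `D`, which is `𝒩(0,1)(√λ₂ D)`.
-/

open MeasureTheory Real Set Matrix ProbabilityTheory
open scoped ENNReal

noncomputable def gaussPrec (n : ℕ) (Q : Matrix (Fin n) (Fin n) ℝ) :
    Measure (Fin n → ℝ) :=
  volume.withDensity fun x => ENNReal.ofReal (Real.exp (-(x ⬝ᵥ (Q *ᵥ x)) / 2))

section QuadraticForm

open scoped MatrixOrder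

variable {ι : Type*} [Fintype ι] [DecidableEq ι] {Q : Matrix ι ι ℝ} {lam : ℝ}

lemma Matrix.IsHermitian.dotProduct_mulVec_le_of_spectrum_le (hQ : Q.IsHermitian)
    (h : ∀ μ ∈ spectrum ℝ Q, μ ≤ lam) (x : ι → ℝ) :
    x ⬝ᵥ Q *ᵥ x ≤ lam * (x ⬝ᵥ x) := by
  have hle : Q ≤ algebraMap ℝ _ lam := (le_algebraMap_iff_spectrum_le hQ).mpr h
  have := (Matrix.le_iff.mp hle).dotProduct_mulVec_nonneg x
  simpa only [star_trivial, Algebra.algebraMap_eq_smul_one, sub_mulVec, smul_mulVec, one_mulVec,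
    dotProduct_sub, dotProduct_smul, smul_eq_mul, sub_nonneg] using this

lemma Matrix.IsHermitian.le_dotProduct_mulVec_of_le_spectrum (hQ : Q.IsHermitian)
    (h : ∀ μ ∈ spectrum ℝ Q, lam ≤ μ) (x : ι → ℝ) :
    lam * (x ⬝ᵥ x) ≤ x ⬝ᵥ Q *ᵥ x := by
  have hle : algebraMap ℝ _ lam ≤ Q := (algebraMap_le_iff_le_spectrum hQ).mpr h
  have := (Matrix.le_iff.mp hle).dotProduct_mulVec_nonneg x
  simpa only [star_trivial, Algebra.algebraMap_eq_smul_one, sub_mulVec, smul_mulVec, one_mulVec,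
    dotProduct_sub, dotProduct_smul, smul_eq_mul, sub_nonneg] using this

end QuadraticForm

lemma lintegral_pi_prod_eq_pow {α : Type*} [MeasurableSpace α] (μ : Measure α) [SigmaFinite μ]
    {f : α → ℝ≥0∞} (hf : Measurable f) (n : ℕ) :
    ∫⁻ x : Fin n → α, ∏ i, f (x i) ∂Measure.pi (fun _ => μ) = (∫⁻ t, f t ∂μ) ^ n := by
  induction n with
  | zero => simp
  | succ n ih =>
    let e := MeasurableEquiv.piFinSuccAbove (fun _ : Fin (n + 1) => α) 0
    have hprod : Measurable fun y : Fin n → α => ∏ i, f (y i) := by fun_prop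
    rw [← ((measurePreserving_piFinSuccAbove (fun _ => μ) 0).symm).lintegral_comp_emb
      e.symm.measurableEmbedding]
    simp only [MeasurableEquiv.piFinSuccAbove_symm_apply, Fin.insertNthEquiv_zero,
      Fin.consEquiv_apply, Fin.prod_univ_succ, Fin.cons_zero, Fin.cons_succ]
    rw [lintegral_prod_mul hf.aemeasurable hprod.aemeasurable, ih, pow_succ']

lemma setLIntegral_univ_pi_prod_eq_pow {α : Type*} [MeasurableSpace α] (μ : Measure α)
    [SigmaFinite μ] {f : α → ℝ≥0∞} (hf : Measurable f) (n : ℕ) (s : Set α) :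
    ∫⁻ x in univ.pi fun _ : Fin n => s, ∏ i, f (x i) ∂Measure.pi (fun _ => μ) =
      (∫⁻ t in s, f t ∂μ) ^ n := by
  rw [Measure.restrict_pi_pi]
  exact lintegral_pi_prod_eq_pow _ hf n

/-- The unnormalized density of `𝒩(0, lam⁻¹)`. -/
noncomputable def gaussKernel (lam t : ℝ) : ℝ≥0∞ := ENNReal.ofReal (exp (-(lam * t ^ 2) / 2))

lemma measurable_gaussKernel (lam : ℝ) : Measurable (gaussKernel lam) := by
  unfold gaussKernel
  fun_prop

lemma lintegral_gaussKernel {lam : ℝ} (hlam : 0 < lam) :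
    ∫⁻ t, gaussKernel lam t = ENNReal.ofReal √(2 * π / lam) := by
  have h : ∀ t : ℝ, -(lam * t ^ 2) / 2 = -(lam / 2) * t ^ 2 := fun t => by ring
  simp only [gaussKernel, h]
  rw [← ofReal_integral_eq_lintegral_ofReal (integrable_exp_neg_mul_sq (by positivity))
    (ae_of_all _ fun t => (exp_pos _).le), integral_gaussian, div_div_eq_mul_div, mul_comm]

lemma prod_gaussKernel {ι : Type*} [Fintype ι] (lam : ℝ) (x : ι → ℝ) :
    ∏ i, gaussKernel lam (x i) = ENNReal.ofReal (exp (-(lam * (x ⬝ᵥ x)) / 2)) := by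
  have h : -(lam * (x ⬝ᵥ x)) / 2 = ∑ i, -(lam * x i ^ 2) / 2 := by
    simp only [dotProduct, ← pow_two, Finset.mul_sum, ← Finset.sum_div, Finset.sum_neg_distrib]
  rw [h, exp_sum, ENNReal.ofReal_prod_of_nonneg fun i _ => (exp_pos _).le]
  rfl

/-- `𝒩(0,1)(√λ • s) = 𝒩(0, λ⁻¹)(s)`, written through the unnormalized density. -/
lemma gaussianReal_image_sqrt_mul {lam : ℝ} (hlam : 0 < lam) (s : Set ℝ) :
    gaussianReal 0 1 ((fun x => √lam * x) '' s) =
      ENNReal.ofReal √(lam / (2 * π)) * ∫⁻ t in s, gaussKernel lam t := by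
  have hc : √lam ≠ 0 := (sqrt_pos.mpr hlam).ne'
  let e := (Homeomorph.mulLeft₀ (√lam) hc).toMeasurableEquiv
  have he : (fun x => √lam * x) '' s = e.symm ⁻¹' s := e.toEquiv.image_eq_preimage_symm s
  rw [he, ← e.symm.map_apply, show ⇑e.symm = fun x => (√lam)⁻¹ * x from rfl,
    gaussianReal_map_const_mul, mul_zero, gaussianReal_apply _ ?_,
    ← lintegral_const_mul' _ _ ENNReal.ofReal_ne_top]
  · congr with t
    simp only [gaussianPDF, gaussianPDFReal, gaussKernel, NNReal.coe_mk, mul_one, sub_zero,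
      inv_pow, sq_sqrt hlam.le]
    rw [← ENNReal.ofReal_mul (by positivity), ← sqrt_inv]
    congr 2 <;> field_simp
  · rw [ne_eq, ← NNReal.coe_eq_zero]
    simp [hc]

section GaussPrec

variable {n : ℕ} {Q : Matrix (Fin n) (Fin n) ℝ} {lam : ℝ}

lemma gaussPrec_le_setLIntegral_prod_gaussKernel (hQ : Q.IsHermitian)
    (h : ∀ μ ∈ spectrum ℝ Q, lam ≤ μ) (S : Set (Fin n → ℝ)) :
    gaussPrec n Q S ≤ ∫⁻ x in S, ∏ i, gaussKernel lam (x i) := by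
  rw [gaussPrec, withDensity_apply' _ S]
  refine lintegral_mono fun x => ?_
  rw [prod_gaussKernel]
  gcongr
  linarith [hQ.le_dotProduct_mulVec_of_le_spectrum h x]

lemma setLIntegral_prod_gaussKernel_le_gaussPrec (hQ : Q.IsHermitian)
    (h : ∀ μ ∈ spectrum ℝ Q, μ ≤ lam) (S : Set (Fin n → ℝ)) :
    ∫⁻ x in S, ∏ i, gaussKernel lam (x i) ≤ gaussPrec n Q S := by
  rw [gaussPrec, withDensity_apply' _ S]
  refine lintegral_mono fun x => ?_
  rw [prod_gaussKernel]
  gcongr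
  linarith [hQ.dotProduct_mulVec_le_of_spectrum_le h x]

end GaussPrec

lemma div_rpow_half_mul_sqrt_pow_mul_sqrt_pow {a b c : ℝ} (ha : 0 < a) (hb : 0 < b)
    (hc : 0 < c) (n : ℕ) :
    ENNReal.ofReal ((a / b) ^ ((n : ℝ) / 2)) * ENNReal.ofReal √(b / c) ^ n *
      ENNReal.ofReal √(c / a) ^ n = 1 := by
  have hroot : (a / b) ^ ((n : ℝ) / 2) = √(a / b) ^ n := by
    rw [sqrt_eq_rpow, ← rpow_natCast, ← rpow_mul (by positivity), one_div_mul_eq_div]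
  have hprod : √(a / b) * √(b / c) * √(c / a) = 1 := by
    rw [← sqrt_mul (by positivity), ← sqrt_mul (by positivity), sqrt_eq_one]
    field_simp
  rw [hroot, ← ENNReal.ofReal_pow (by positivity), ← ENNReal.ofReal_pow (by positivity),
    ← ENNReal.ofReal_mul (by positivity), ← ENNReal.ofReal_mul (by positivity), ← mul_pow, ← mul_pow, hprod, one_pow,
    ENNReal.ofReal_one]

theorem stmt_12_general (n : ℕ) (lam₁ lam₂ : ℝ) (h₁ : 0 < lam₁) (h₁₂ : lam₁ ≤ lam₂)
    (Q : Matrix (Fin n) (Fin n) ℝ) (hsym : Q.IsSymm)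
    (heig : ∀ μ ∈ spectrum ℝ Q, μ ∈ Set.Icc lam₁ lam₂)
    (D : Set ℝ) :
    ENNReal.ofReal ((lam₁ / lam₂) ^ ((n : ℝ) / 2)) *
        ((gaussianReal 0 1) ((fun x => Real.sqrt lam₂ * x) '' D)) ^ n *
        gaussPrec n Q Set.univ
      ≤ gaussPrec n Q {x | ∀ i, x i ∈ D} := by
  have hlam₂ : 0 < lam₂ := h₁.trans_le h₁₂
  have hQ : Q.IsHermitian := isHermitian_iff_isSymm.mpr hsym
  have hmass : gaussPrec n Q univ ≤ ENNReal.ofReal √(2 * π / lam₁) ^ n := by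
    have := gaussPrec_le_setLIntegral_prod_gaussKernel hQ (fun μ hμ => (heig μ hμ).1) univ
    rwa [Measure.restrict_univ, volume_pi, lintegral_pi_prod_eq_pow _ (measurable_gaussKernel _),
      lintegral_gaussKernel h₁] at this
  have hbox : (∫⁻ t in D, gaussKernel lam₂ t) ^ n ≤ gaussPrec n Q {x | ∀ i, x i ∈ D} := by
    have := setLIntegral_prod_gaussKernel_le_gaussPrec hQ (fun μ hμ => (heig μ hμ).2)
      (univ.pi fun _ => D)
    rwa [volume_pi, setLIntegral_univ_pi_prod_eq_pow _ (measurable_gaussKernel _),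
      Set.ext fun _ => mem_univ_pi] at this
  rw [gaussianReal_image_sqrt_mul hlam₂]
  calc _ ≤ ENNReal.ofReal ((lam₁ / lam₂) ^ ((n : ℝ) / 2)) *
        (ENNReal.ofReal √(lam₂ / (2 * π)) * ∫⁻ t in D, gaussKernel lam₂ t) ^ n *
        ENNReal.ofReal √(2 * π / lam₁) ^ n := by gcongr
    _ = ENNReal.ofReal ((lam₁ / lam₂) ^ ((n : ℝ) / 2)) * ENNReal.ofReal √(lam₂ / (2 * π)) ^ n *
        ENNReal.ofReal √(2 * π / lam₁) ^ n * (∫⁻ t in D, gaussKernel lam₂ t) ^ n := by ring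
    _ = (∫⁻ t in D, gaussKernel lam₂ t) ^ n := by
      rw [div_rpow_half_mul_sqrt_pow_mul_sqrt_pow h₁ hlam₂ (by positivity), one_mul]
    _ ≤ _ := hbox

theorem stmt_12 (n : ℕ) (lam₁ lam₂ : ℝ) (h₁ : 0 < lam₁) (h₁₂ : lam₁ ≤ lam₂)
    (Q : Matrix (Fin n) (Fin n) ℝ) (hsym : Q.IsSymm) (hpd : Q.PosDef)
    (heig : ∀ μ ∈ spectrum ℝ Q, μ ∈ Set.Icc lam₁ lam₂)
    (D : Set ℝ) (hD : MeasurableSet D) (hDpos : 0 < volume D) :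
    ENNReal.ofReal ((lam₁ / lam₂) ^ ((n : ℝ) / 2)) *
        ((gaussianReal 0 1) ((fun x => Real.sqrt lam₂ * x) '' D)) ^ n *
        gaussPrec n Q Set.univ
      ≤ gaussPrec n Q {x | ∀ i, x i ∈ D} :=
  stmt_12_general n lam₁ lam₂ h₁ h₁₂ Q hsym heig D
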